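/- arXiv:2210.02251 — 3 statements merged into one kernel-verified Lean document; each statement's English description precedes it below -/
import Mathlib

section
/- Let E be a complex manifold, T_A a singular holomorphic foliation of rank one on E, and D̃ a submanifold of E. If D̃ is not invariant by T_A (i.e., some local vector field defining T_A fails to be everywhere tangent to D̃), then there exists a Zariski-dense subset W̃ of D̃ \ Sing(T_A) such that for every e₀ ∈ W̃ there exists a leaf Σ̃ of T_A through e₀ with Σ̃ ∩ D̃ = {e₀}. -/
/-!
The transversality function `x ↦ dg(x)(Z x)` is holomorphic on `U` and, since `D` is not
invariant, does not vanish identically on `D`. Straightening `g` to a linear form by a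
holomorphic chart turns `D` locally into a hyperplane, where the identity theorem applies;
connectedness of `D` then shows that the transversality function vanishes on no open piece of
`D`, i.e. its nonvanishing locus is dense in `D`. Through a point `e₀` of that locus, the
integral curve `γ` of `Z` (obtained by Picard iteration in complex time) satisfies
`(g ∘ γ)'(0) = dg(e₀)(Z e₀) ≠ 0`, so `0` is an isolated zero of `g ∘ γ` and the leaf meets `D`
only at `e₀`.
-/

open Metric Filter Set Topology
open scoped NNReal

theorem tendstoUniformlyOn_limUnder_of_dist_le_geometric_two {α β : Type*}
    [PseudoMetricSpace β] [CompleteSpace β] [Nonempty β] {u : ℕ → α → β} {s : Set α} {C : ℝ}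
    (hu : ∀ n, ∀ x ∈ s, dist (u n x) (u (n + 1) x) ≤ C / 2 / 2 ^ n) :
    TendstoUniformlyOn u (fun x => limUnder atTop fun n => u n x) atTop s := by
  have hC : Tendsto (fun n : ℕ => C / 2 ^ n) atTop (𝓝 0) :=
    tendsto_const_nhds.div_atTop (tendsto_pow_atTop_atTop_of_one_lt one_lt_two)
  rw [Metric.tendstoUniformlyOn_iff]
  intro δ hδ
  filter_upwards [hC.eventually (gt_mem_nhds hδ)] with n hn x hx
  rw [dist_comm]
  have hlim := (cauchySeq_of_le_geometric_two (hu · x hx)).tendsto_limUnder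
  exact (dist_le_of_le_geometric_two_of_tendsto (hu · x hx) hlim n).trans_lt hn

section PicardIteration

variable {F : Type*} [NormedAddCommGroup F] [NormedSpace ℂ F]

/-- The Picard operator `γ ↦ e₀ + ∫₀ᵗ Z ∘ γ` in complex time, the integral being taken along
the two sides of the rectangle spanned by `0` and `t`. -/
noncomputable def picardMap (Z : F → F) (e₀ : F) (γ : ℂ → F) : ℂ → F :=
  fun t => e₀ + Complex.wedgeIntegral 0 t (Z ∘ γ)

def holomorphicCurvesInto (ε : ℝ) (e₀ : F) (K : Set F) : Set (ℂ → F) :=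
  {γ | γ 0 = e₀ ∧ DifferentiableOn ℂ γ (ball 0 ε) ∧ MapsTo γ (ball 0 ε) K}

variable {Z : F → F} {e₀ : F} {ρ ε M : ℝ} {L : ℝ≥0}

theorem picardMap_zero (γ : ℂ → F) : picardMap Z e₀ γ 0 = e₀ := by
  simp [picardMap, Complex.wedgeIntegral]

variable [CompleteSpace F] (hZ : ∀ x ∈ closedBall e₀ ρ, DifferentiableAt ℂ Z x)
include hZ

theorem hasDerivAt_picardMap {γ : ℂ → F} (hγ : γ ∈ holomorphicCurvesInto ε e₀ (closedBall e₀ ρ))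
    {t : ℂ} (ht : t ∈ ball 0 ε) : HasDerivAt (picardMap Z e₀ γ) (Z (γ t)) t := by
  have hZγ : DifferentiableOn ℂ (Z ∘ γ) (ball 0 ε) :=
    fun s hs => (hZ _ (hγ.2.2 hs)).comp_differentiableWithinAt s (hγ.2.1 s hs)
  exact (hZγ.isConservativeOn.hasDerivAt_wedgeIntegral hZγ.continuousOn ht).const_add e₀

theorem picardMap_mem_holomorphicCurvesInto (hM : ∀ x ∈ closedBall e₀ ρ, ‖Z x‖ ≤ M)
    (hMε : M * ε ≤ ρ) {γ : ℂ → F} (hγ : γ ∈ holomorphicCurvesInto ε e₀ (closedBall e₀ ρ)) :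
    picardMap Z e₀ γ ∈ holomorphicCurvesInto ε e₀ (closedBall e₀ ρ) := by
  have hderiv := fun t (ht : t ∈ ball (0 : ℂ) ε) => hasDerivAt_picardMap hZ hγ ht
  refine ⟨picardMap_zero γ, fun t ht => (hderiv t ht).differentiableAt.differentiableWithinAt,
    fun t ht => ?_⟩
  have hε : 0 < ε := (norm_nonneg t).trans_lt (mem_ball_zero_iff.1 ht)
  have hM0 : 0 ≤ M := (norm_nonneg _).trans (hM _ (hγ.2.2 (mem_ball_self hε)))
  have hmv := (convex_ball (0 : ℂ) ε).norm_image_sub_le_of_norm_hasDerivWithin_le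
    (fun s hs => (hderiv s hs).hasDerivWithinAt) (fun s hs => hM _ (hγ.2.2 hs))
    (mem_ball_self hε) ht
  rw [picardMap_zero, sub_zero] at hmv
  rw [mem_closedBall, dist_eq_norm]
  calc ‖picardMap Z e₀ γ t - e₀‖ ≤ M * ‖t‖ := hmv
    _ ≤ M * ε := mul_le_mul_of_nonneg_left (mem_ball_zero_iff.1 ht).le hM0
    _ ≤ ρ := hMε

theorem dist_picardMap_le (hLip : LipschitzOnWith L Z (closedBall e₀ ρ)) (hLε : L * ε ≤ 1 / 2)
    {γ₁ γ₂ : ℂ → F} (hγ₁ : γ₁ ∈ holomorphicCurvesInto ε e₀ (closedBall e₀ ρ))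
    (hγ₂ : γ₂ ∈ holomorphicCurvesInto ε e₀ (closedBall e₀ ρ)) {δ : ℝ}
    (hδ : ∀ t ∈ ball (0 : ℂ) ε, dist (γ₁ t) (γ₂ t) ≤ δ) {t : ℂ} (ht : t ∈ ball (0 : ℂ) ε) :
    dist (picardMap Z e₀ γ₁ t) (picardMap Z e₀ γ₂ t) ≤ δ / 2 := by
  have hε : 0 < ε := (norm_nonneg t).trans_lt (mem_ball_zero_iff.1 ht)
  have hδ0 : 0 ≤ δ := dist_nonneg.trans (hδ 0 (mem_ball_self hε))
  have hmv := (convex_ball (0 : ℂ) ε).norm_image_sub_le_of_norm_hasDerivWithin_le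
    (f := fun s => picardMap Z e₀ γ₁ s - picardMap Z e₀ γ₂ s) (C := L * δ)
    (fun s hs => ((hasDerivAt_picardMap hZ hγ₁ hs).sub
      (hasDerivAt_picardMap hZ hγ₂ hs)).hasDerivWithinAt)
    (fun s hs => by
      rw [← dist_eq_norm]
      exact (hLip.dist_le_mul _ (hγ₁.2.2 hs) _ (hγ₂.2.2 hs)).trans
        (mul_le_mul_of_nonneg_left (hδ s hs) L.2))
    (mem_ball_self hε) ht
  simp only [picardMap_zero, sub_self, sub_zero] at hmv
  rw [dist_eq_norm]
  calc ‖picardMap Z e₀ γ₁ t - picardMap Z e₀ γ₂ t‖ ≤ L * δ * ‖t‖ := hmv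
    _ ≤ L * δ * ε := mul_le_mul_of_nonneg_left (mem_ball_zero_iff.1 ht).le (by positivity)
    _ = (L * ε) * δ := by ring
    _ ≤ 1 / 2 * δ := mul_le_mul_of_nonneg_right hLε hδ0
    _ = δ / 2 := by ring

theorem iterate_picardMap_mem_holomorphicCurvesInto (hρ : 0 ≤ ρ)
    (hM : ∀ x ∈ closedBall e₀ ρ, ‖Z x‖ ≤ M) (hMε : M * ε ≤ ρ) (k : ℕ) :
    (picardMap Z e₀)^[k] (fun _ => e₀) ∈ holomorphicCurvesInto ε e₀ (closedBall e₀ ρ) := by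
  induction k with
  | zero => exact ⟨rfl, differentiableOn_const _, fun _ _ => mem_closedBall_self hρ⟩
  | succ k ih =>
    rw [Function.iterate_succ_apply']
    exact picardMap_mem_holomorphicCurvesInto hZ hM hMε ih

theorem dist_iterate_picardMap_le (hρ : 0 ≤ ρ) (hLip : LipschitzOnWith L Z (closedBall e₀ ρ))
    (hM : ∀ x ∈ closedBall e₀ ρ, ‖Z x‖ ≤ M) (hMε : M * ε ≤ ρ) (hLε : L * ε ≤ 1 / 2) (k : ℕ) :
    ∀ t ∈ ball (0 : ℂ) ε, dist ((picardMap Z e₀)^[k] (fun _ => e₀) t)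
      ((picardMap Z e₀)^[k + 1] (fun _ => e₀) t) ≤ 2 * ρ / 2 / 2 ^ k := by
  have hmem := iterate_picardMap_mem_holomorphicCurvesInto hZ hρ hM hMε
  induction k with
  | zero =>
    intro t ht
    simpa [dist_comm] using (hmem 1).2.2 ht
  | succ k ih =>
    intro t ht
    rw [Function.iterate_succ_apply' _ k, Function.iterate_succ_apply' _ (k + 1)]
    calc _ ≤ 2 * ρ / 2 / 2 ^ k / 2 := dist_picardMap_le hZ hLip hLε (hmem k) (hmem (k + 1)) ih ht
      _ = 2 * ρ / 2 / 2 ^ (k + 1) := by ring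

theorem exists_mem_holomorphicCurvesInto_hasDerivAt (hρ : 0 ≤ ρ)
    (hLip : LipschitzOnWith L Z (closedBall e₀ ρ)) (hM : ∀ x ∈ closedBall e₀ ρ, ‖Z x‖ ≤ M)
    (hMε : M * ε ≤ ρ) (hLε : L * ε ≤ 1 / 2) :
    ∃ γ ∈ holomorphicCurvesInto ε e₀ (closedBall e₀ ρ),
      ∀ t ∈ ball 0 ε, HasDerivAt γ (Z (γ t)) t := by
  set γs : ℕ → ℂ → F := fun k => (picardMap Z e₀)^[k] fun _ => e₀
  have hmem : ∀ k, γs k ∈ holomorphicCurvesInto ε e₀ (closedBall e₀ ρ) :=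
    iterate_picardMap_mem_holomorphicCurvesInto hZ hρ hM hMε
  have hdist : ∀ k, ∀ t ∈ ball (0 : ℂ) ε, dist (γs k t) (γs (k + 1) t) ≤ 2 * ρ / 2 / 2 ^ k :=
    dist_iterate_picardMap_le hZ hρ hLip hM hMε hLε
  have hγs_succ : ∀ k, γs (k + 1) = picardMap Z e₀ (γs k) := fun k =>
    Function.iterate_succ_apply' _ _ _
  set γ : ℂ → F := fun t => limUnder atTop fun k => γs k t
  have hunif : TendstoUniformlyOn γs γ atTop (ball 0 ε) :=
    tendstoUniformlyOn_limUnder_of_dist_le_geometric_two hdist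
  have hdiff : ∀ᶠ k in atTop, DifferentiableOn ℂ (γs k) (ball 0 ε) :=
    Eventually.of_forall fun k => (hmem k).2.1
  have hmaps : MapsTo γ (ball 0 ε) (closedBall e₀ ρ) := fun t ht =>
    isClosed_closedBall.mem_of_tendsto (hunif.tendsto_at ht)
      (Eventually.of_forall fun k => (hmem k).2.2 ht)
  have hγ0 : γ 0 = e₀ := by
    simp only [γ, fun k => (hmem k).1]
    exact tendsto_const_nhds.limUnder_eq
  have hγdiff : DifferentiableOn ℂ γ (ball 0 ε) :=
    hunif.tendstoLocallyUniformlyOn.differentiableOn hdiff isOpen_ball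
  refine ⟨γ, ⟨hγ0, hγdiff, hmaps⟩, fun t ht => ?_⟩
  -- `γ' = lim γₖ₊₁' = lim Z ∘ γₖ = Z ∘ γ`
  have hderiv_lim : Tendsto (fun k => deriv (γs (k + 1)) t) atTop (𝓝 (deriv γ t)) :=
    ((hunif.tendstoLocallyUniformlyOn.deriv hdiff isOpen_ball).tendsto_at ht).comp
      (tendsto_add_atTop_nat 1)
  have hZ_lim : Tendsto (fun k => deriv (γs (k + 1)) t) atTop (𝓝 (Z (γ t))) := by
    simp only [hγs_succ, (hasDerivAt_picardMap hZ (hmem _) ht).deriv]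
    exact ((hZ _ (hmaps ht)).continuousAt.tendsto).comp (hunif.tendsto_at ht)
  exact tendsto_nhds_unique hderiv_lim hZ_lim ▸
    (hγdiff.differentiableAt (isOpen_ball.mem_nhds ht)).hasDerivAt

end PicardIteration

section IntegralCurve

variable {F G : Type*} [NormedAddCommGroup F] [NormedSpace ℂ F] [CompleteSpace F]
  [NormedAddCommGroup G] [NormedSpace ℂ G] {Z : F → F} {e₀ : F} {U : Set F}

theorem ContDiffAt.exists_holomorphic_integralCurve (hZ : ContDiffAt ℂ 1 Z e₀) (hU : U ∈ 𝓝 e₀) :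
    ∃ ε > (0 : ℝ), ∃ γ : ℂ → F, γ 0 = e₀ ∧
      ∀ t ∈ ball (0 : ℂ) ε, γ t ∈ U ∧ HasDerivAt γ (Z (γ t)) t := by
  obtain ⟨L, s, hs, hLip⟩ := hZ.exists_lipschitzOnWith
  have hdiff : ∀ᶠ x in 𝓝 e₀, DifferentiableAt ℂ Z x :=
    (hZ.eventually (by simp)).mono fun x hx => hx.differentiableAt one_ne_zero
  obtain ⟨ρ, hρ, hρsub⟩ := nhds_basis_closedBall.mem_iff.1 (inter_mem (inter_mem hU hs) hdiff)
  have hLipρ : LipschitzOnWith L Z (closedBall e₀ ρ) := hLip.mono fun y hy => (hρsub hy).1.2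
  set M := ‖Z e₀‖ + L * ρ
  have hM : ∀ x ∈ closedBall e₀ ρ, ‖Z x‖ ≤ M := fun x hx => by
    have hLx := hLipρ.dist_le_mul x hx e₀ (mem_closedBall_self hρ.le)
    rw [dist_eq_norm] at hLx
    calc ‖Z x‖ ≤ ‖Z e₀‖ + ‖Z x - Z e₀‖ := norm_le_insert' _ _
      _ ≤ M := add_le_add_right (hLx.trans (mul_le_mul_of_nonneg_left (mem_closedBall.1 hx) L.2)) _
  -- small enough for the Picard map to keep curves in `closedBall e₀ ρ` and to contract
  set ε := min (ρ / (M + 1)) (1 / (2 * (L + 1)))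
  have hM0 : 0 ≤ M := by positivity
  have hε : 0 < ε := lt_min (by positivity) (by positivity)
  have hMε : M * ε ≤ ρ := calc
    M * ε ≤ M * (ρ / (M + 1)) := mul_le_mul_of_nonneg_left (min_le_left _ _) hM0
    _ ≤ ρ := by rw [mul_div_assoc', div_le_iff₀ (by positivity)]; nlinarith
  have hLε : L * ε ≤ 1 / 2 := calc
    L * ε ≤ L * (1 / (2 * (L + 1))) := mul_le_mul_of_nonneg_left (min_le_right _ _) L.2
    _ ≤ 1 / 2 := by rw [mul_one_div, div_le_div_iff₀ (by positivity) two_pos]; nlinarith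
  obtain ⟨γ, hγ, hderiv⟩ := exists_mem_holomorphicCurvesInto_hasDerivAt
    (fun x hx => (hρsub hx).2) hρ.le hLipρ hM hMε hLε
  exact ⟨ε, hε, γ, hγ.1, fun t ht => ⟨(hρsub (hγ.2.2 ht)).1.1, hderiv t ht⟩⟩

theorem ContDiffAt.exists_holomorphic_integralCurve_leaving_levelSet (hZ : ContDiffAt ℂ 1 Z e₀)
    (hU : U ∈ 𝓝 e₀) {g : F → G} (hg : DifferentiableAt ℂ g e₀)
    (htrans : fderiv ℂ g e₀ (Z e₀) ≠ 0) :
    ∃ ε > (0 : ℝ), ∃ γ : ℂ → F, γ 0 = e₀ ∧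
      (∀ t ∈ ball (0 : ℂ) ε, γ t ∈ U ∧ HasDerivAt γ (Z (γ t)) t) ∧
      ∀ t ∈ ball (0 : ℂ) ε, g (γ t) = g e₀ → t = 0 := by
  obtain ⟨ε, hε, γ, hγ0, hγ⟩ := hZ.exists_holomorphic_integralCurve hU
  have hgγ : HasDerivAt (g ∘ γ) (fderiv ℂ g e₀ (Z e₀)) 0 := by
    have hg' : HasFDerivAt g (fderiv ℂ g e₀) (γ 0) := by rw [hγ0]; exact hg.hasFDerivAt
    have hγ' := (hγ 0 (mem_ball_self hε)).2
    rw [hγ0] at hγ'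
    exact hg'.comp_hasDerivAt 0 hγ'
  obtain ⟨δ, hδ, hne⟩ := Metric.eventually_nhds_iff_ball.1
    (eventually_nhdsWithin_iff.1 (hgγ.eventually_ne htrans (c := g e₀)))
  refine ⟨min ε δ, lt_min hε hδ, γ, hγ0, fun t ht => hγ t (ball_subset_ball (min_le_left _ _) ht),
    fun t ht hgt => ?_⟩
  by_contra ht0
  exact hne t (ball_subset_ball (min_le_right _ _) ht) ht0 hgt

end IntegralCurve

section Hypersurface

variable {E F : Type*} [NormedAddCommGroup E] [NormedSpace ℂ E]
  [NormedAddCommGroup F] [NormedSpace ℂ F]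

theorem AnalyticOnNhd.eqOn_zero_inter_ker_of_eventuallyEq_zero {ℓ : E →L[ℂ] ℂ} {v : E}
    (hv : ℓ v = 1) {s : Set E} (hs : Convex ℝ s) {H : E → F}
    (hH : AnalyticOnNhd ℂ H s) {a : E} (ha : a ∈ s) (hℓa : ℓ a = 0)
    (hHa : H =ᶠ[𝓝[{y | ℓ y = 0}] a] 0) : EqOn H 0 (s ∩ {y | ℓ y = 0}) := by
  -- Extend `H` from `ker ℓ` by the projection `π` along `v`; on the convex set `π ⁻¹' s` the
  -- identity theorem applies.
  set π : E →L[ℂ] E := ContinuousLinearMap.id ℂ E - ℓ.smulRight v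
  have hπ : ∀ y, π y = y - ℓ y • v := fun y => rfl
  have hℓπ : ∀ y, ℓ (π y) = 0 := fun y => by simp [hπ, hv]
  have hπ_fix : ∀ y, ℓ y = 0 → π y = y := fun y hy => by simp [hπ, hy]
  have hconv : Convex ℝ (π ⁻¹' s) := hs.linear_preimage (π.toLinearMap.restrictScalars ℝ)
  have hHπ : AnalyticOnNhd ℂ (H ∘ π) (π ⁻¹' s) := fun y hy => (hH _ hy).comp (π.analyticAt y)
  have hπ_tendsto : Tendsto π (𝓝 a) (𝓝[{y | ℓ y = 0}] a) :=
    tendsto_nhdsWithin_iff.2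
      ⟨by simpa only [hπ_fix a hℓa] using π.continuous.tendsto a, Eventually.of_forall hℓπ⟩
  have hzero := hHπ.eqOn_zero_of_preconnected_of_eventuallyEq_zero hconv.isPreconnected
    (show π a ∈ s by rwa [hπ_fix a hℓa]) (hπ_tendsto.eventually hHa)
  rintro y ⟨hys, hy⟩
  have := hzero (show π y ∈ s by rwa [hπ_fix y hy])
  rwa [Function.comp_apply, hπ_fix y hy] at this

variable [CompleteSpace E]

theorem AnalyticAt.exists_openPartialHomeomorph_fderiv_comp_eq {g : E → ℂ} {x₀ v : E}
    (hg : AnalyticAt ℂ g x₀) (hv : fderiv ℂ g x₀ v = 1) :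
    ∃ f : OpenPartialHomeomorph E E, x₀ ∈ f.source ∧ AnalyticAt ℂ f.symm (f x₀) ∧
      ∀ x, fderiv ℂ g x₀ (f x) = g x := by
  set ℓ := fderiv ℂ g x₀
  -- `ℓ ∘ Φ = g` since `ℓ v = 1`, and `Φ` is tangent to the identity at `x₀`.
  set Φ : E → E := fun x => x + (g x - ℓ x) • v
  have hΦ : HasStrictFDerivAt Φ ((ContinuousLinearEquiv.refl ℂ E : E →L[ℂ] E)) x₀ := by
    have := (hasStrictFDerivAt_id x₀).add
      ((hg.hasStrictFDerivAt.sub ℓ.hasStrictFDerivAt).smul_const v)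
    rwa [sub_self, ContinuousLinearMap.zero_smulRight, add_zero] at this
  have hΦa : AnalyticAt ℂ Φ x₀ :=
    analyticAt_id.add ((hg.sub (ℓ.analyticAt x₀)).smul analyticAt_const)
  refine ⟨hΦ.toOpenPartialHomeomorph Φ, hΦ.mem_toOpenPartialHomeomorph_source,
    OpenPartialHomeomorph.analyticAt_symm' _ hΦ.mem_toOpenPartialHomeomorph_source hΦa
      hΦ.hasFDerivAt.fderiv, fun x => ?_⟩
  simp [Φ, hv]

variable [CompleteSpace F]

theorem AnalyticAt.eventuallyEq_zero_nhdsWithin_zeroSet_of_mem_closure {g : E → ℂ} {h : E → F}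
    {x₀ : E} (hg : AnalyticAt ℂ g x₀) (hdg : fderiv ℂ g x₀ ≠ 0) (hh : AnalyticAt ℂ h x₀)
    (hx₀ : x₀ ∈ closure {a | g a = 0 ∧ h =ᶠ[𝓝[{y | g y = 0}] a] 0}) :
    h =ᶠ[𝓝[{y | g y = 0}] x₀] 0 := by
  obtain ⟨w, hw⟩ : ∃ w, fderiv ℂ g x₀ w ≠ 0 := by
    by_contra! hw
    exact hdg (ContinuousLinearMap.ext hw)
  set ℓ := fderiv ℂ g x₀
  have hv : ℓ ((ℓ w)⁻¹ • w) = 1 := by simp [hw]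
  obtain ⟨f, hx₀f, hsymm, hℓf⟩ := hg.exists_openPartialHomeomorph_fderiv_comp_eq hv
  have hN : ∀ᶠ y in 𝓝 (f x₀), y ∈ f.target ∧ AnalyticAt ℂ (h ∘ f.symm) y := by
    have hh' : ∀ᶠ y in 𝓝 (f x₀), AnalyticAt ℂ h (f.symm y) :=
      (f.continuousAt_symm (f.map_source hx₀f)).eventually
        (by rw [f.left_inv hx₀f]; exact hh.eventually_analyticAt)
    filter_upwards [f.open_target.mem_nhds (f.map_source hx₀f), hsymm.eventually_analyticAt,
      hh'] with y hyf hy hhy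
    exact ⟨hyf, hhy.comp hy⟩
  obtain ⟨r, hr, hball⟩ := Metric.eventually_nhds_iff_ball.1 hN
  have hnhds : f.source ∩ f ⁻¹' ball (f x₀) r ∈ 𝓝 x₀ :=
    inter_mem (f.open_source.mem_nhds hx₀f) (f.continuousAt hx₀f (ball_mem_nhds _ hr))
  obtain ⟨a, ⟨haf, har⟩, hga, hha⟩ := mem_closure_iff_nhds.1 hx₀ _ hnhds
  have hsymm_tendsto : Tendsto f.symm (𝓝[{y | ℓ y = 0}] (f a)) (𝓝[{y | g y = 0}] a) := by
    refine tendsto_nhdsWithin_iff.2 ⟨?_, ?_⟩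
    · simpa only [f.left_inv haf] using
        (f.continuousAt_symm (f.map_source haf)).tendsto.mono_left nhdsWithin_le_nhds
    · filter_upwards [nhdsWithin_le_nhds (f.open_target.mem_nhds (f.map_source haf)),
        self_mem_nhdsWithin] with y hyf hℓy
      rw [← hℓf, f.right_inv hyf]
      exact hℓy
  have hzero := AnalyticOnNhd.eqOn_zero_inter_ker_of_eventuallyEq_zero hv (convex_ball _ _)
    (fun y hy => (hball y hy).2) har (by rw [hℓf, hga]) (hsymm_tendsto.eventually hha)
  filter_upwards [nhdsWithin_le_nhds hnhds, self_mem_nhdsWithin] with x ⟨hxf, hxr⟩ hgx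
  simpa [f.left_inv hxf] using hzero ⟨hxr, (hℓf x).trans hgx⟩

theorem subset_closure_setOf_ne_zero_of_isPreconnected {U : Set E} (hU : IsOpen U) {g : E → ℂ}
    (hg : AnalyticOnNhd ℂ g U) {h : E → F} (hh : AnalyticOnNhd ℂ h U)
    (hD : IsPreconnected {x ∈ U | g x = 0}) (hreg : ∀ x ∈ {x ∈ U | g x = 0}, fderiv ℂ g x ≠ 0)
    (hne : ∃ x ∈ {x ∈ U | g x = 0}, h x ≠ 0) :
    {x ∈ U | g x = 0} ⊆ closure {x ∈ {x ∈ U | g x = 0} | h x ≠ 0} := by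
  set D := {x ∈ U | g x = 0}
  have hnhds : ∀ a ∈ D, 𝓝[D] a = 𝓝[{y | g y = 0}] a := fun a ha =>
    nhdsWithin_inter_of_mem (mem_nhdsWithin_of_mem_nhds (hU.mem_nhds ha.1))
  have := isPreconnected_iff_preconnectedSpace.1 hD
  set P : Set D := {a | h =ᶠ[𝓝[D] (a : E)] 0}
  have hPopen : IsOpen P := by
    refine continuous_subtype_val.isOpen_preimage {a | h =ᶠ[𝓝[D] a] 0} ?_
    simp only [EventuallyEq, eventually_nhdsWithin_iff]
    exact isOpen_setOfPred_eventually_nhds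
  have hPclosed : IsClosed P := by
    rw [← closure_subset_iff_isClosed]
    rintro ⟨x, hx⟩ hcl
    rw [closure_subtype] at hcl
    change h =ᶠ[𝓝[D] x] 0
    rw [hnhds x hx]
    refine (hg x hx.1).eventuallyEq_zero_nhdsWithin_zeroSet_of_mem_closure (hreg x hx)
      (hh x hx.1) (closure_mono ?_ hcl)
    rintro _ ⟨⟨a, ha⟩, hPa, rfl⟩
    exact ⟨ha.2, hnhds a ha ▸ hPa⟩
  rcases isClopen_iff.1 ⟨hPclosed, hPopen⟩ with hP | hP
  · intro x hx
    have hxP : ¬ h =ᶠ[𝓝[D] x] 0 := (hP ▸ notMem_empty _ : (⟨x, hx⟩ : D) ∉ P)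
    rw [EventuallyEq, not_eventually, frequently_nhdsWithin_iff] at hxP
    exact mem_closure_iff_frequently.2 (hxP.mono fun y hy => ⟨hy.2, hy.1⟩)
  · obtain ⟨x, hx, hhx⟩ := hne
    have hxP : (⟨x, hx⟩ : D) ∈ P := hP ▸ mem_univ _
    exact absurd (hxP.self_of_nhdsWithin hx) hhx

end Hypersurface

/- Local model: `E` is the open set `U ⊆ ℂⁿ`, `T_A` is generated by the holomorphic vector field
`Z` with `Sing(T_A) = {Z = 0}`, leaves are complex-time integral curves of `Z`, and `D̃` is the
hypersurface `D = {g = 0}` with `dg ≠ 0` along it. -/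
theorem leaf_through_generic_point_meets_divisor_once
    (n : ℕ) (U : Set (Fin n → ℂ)) (hU : IsOpen U)
    (Z : (Fin n → ℂ) → (Fin n → ℂ)) (hZ : AnalyticOnNhd ℂ Z U)
    (g : (Fin n → ℂ) → ℂ) (hg : AnalyticOnNhd ℂ g U)
    (D : Set (Fin n → ℂ)) (hD : D = {x ∈ U | g x = 0})
    (hDconn : IsPreconnected D)
    (hreg : ∀ x ∈ D, fderiv ℂ g x ≠ 0)
    (hnotinv : ∃ x ∈ D, fderiv ℂ g x (Z x) ≠ 0) :
    ∀ x ∈ D, x ∈ closure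
      {e₀ | e₀ ∈ D ∧ Z e₀ ≠ 0 ∧
        ∃ ε > (0 : ℝ), ∃ γ : ℂ → (Fin n → ℂ),
          γ 0 = e₀ ∧
          (∀ t ∈ ball (0 : ℂ) ε, γ t ∈ U ∧ HasDerivAt γ (Z (γ t)) t) ∧
          (∀ t ∈ ball (0 : ℂ) ε, γ t ∈ D → γ t = e₀)} := by
  subst hD
  have htrans : AnalyticOnNhd ℂ (fun x => fderiv ℂ g x (Z x)) U := fun x hx =>
    AnalyticAt.fun_comp (g := fun p => ContinuousLinearMap.apply ℂ ℂ p.1 p.2)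
      ((ContinuousLinearMap.apply ℂ ℂ).analyticAt_bilinear (Z x, fderiv ℂ g x))
      ((hZ x hx).prod (hg.fderiv x hx))
  intro x hx
  refine closure_mono ?_
    (subset_closure_setOf_ne_zero_of_isPreconnected hU hg htrans hDconn hreg hnotinv hx)
  rintro e₀ ⟨he₀, he₀_trans⟩
  obtain ⟨ε, hε, γ, hγ0, hγ, honce⟩ :=
    (hZ e₀ he₀.1).contDiffAt.exists_holomorphic_integralCurve_leaving_levelSet
      (hU.mem_nhds he₀.1) (hg e₀ he₀.1).differentiableAt he₀_trans
  refine ⟨he₀, fun hZ0 => he₀_trans (by rw [hZ0, map_zero]), ε, hε, γ, hγ0, hγ,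
    fun t ht hγt => ?_⟩
  rw [honce t ht (hγt.2.trans he₀.2.symm), hγ0]
end

section
/- Let ∇ be a holomorphic branched affine connection on a pair (M,D), i.e., a meromorphic affine connection on TM with poles at D that preserves a locally free submodule E with TM ⊂ E ⊂ TM(*D) of full rank. Then the submodule E is unique. -/
/-!
On `Ω = U \ D` the gauge transformation `b = Q₁⁻¹ Q₂` solves `db = b B₂ - B₁ b`, where `B₁, B₂`
are the connection forms of `∇` in the two frames, holomorphic on all of `U`, and `gᵏ b` is
holomorphic on `U`. Such a `b` extends across `D`. Near a point `x₀` of `U` choose a direction `v`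
along which `f = gᵏ` vanishes to a finite order `j` at `x₀`, and let `∇ᵢ = ∂_v + Bᵢ(v)`. The
gauge equation gives `∇₁ʲ (f b) = b ∇₂ʲ (f • 1)` on `Ω`, and along the line `x₀ + t v` each
application of `∇₂` lowers the order of vanishing by one, so `∇₂ʲ (f • 1)` is invertible at `x₀`
and `b = ∇₁ʲ (f b) (∇₂ʲ (f • 1))⁻¹` near `x₀`. By the identity theorem `Ω` is dense near every
point of `U` where `g` does not vanish identically, so these local extensions glue.
-/

open Set Filter Topology Metric
open scoped Nat

variable {E 𝔸 : Type*} [NormedAddCommGroup E] [NormedSpace ℂ E] [NormedRing 𝔸] [NormedAlgebra ℂ 𝔸]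

theorem AnalyticAt.clm_apply_const {F G : Type*} [NormedAddCommGroup F] [NormedSpace ℂ F]
    [NormedAddCommGroup G] [NormedSpace ℂ G] {B : E → F →L[ℂ] G} {x : E} (hB : AnalyticAt ℂ B x)
    (v : F) : AnalyticAt ℂ (fun y => B y v) x :=
  ((ContinuousLinearMap.apply ℂ G v).analyticAt _).comp hB

theorem fderiv_mul_apply {a b : E → 𝔸} {x : E} (ha : DifferentiableAt ℂ a x)
    (hb : DifferentiableAt ℂ b x) (w : E) :
    fderiv ℂ (a * b) x w = a x * fderiv ℂ b x w + fderiv ℂ a x w * b x := by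
  simp [fderiv_mul' ha hb]

def SolvesGaugeEqOn (B₁ B₂ : E → E →L[ℂ] 𝔸) (b : E → 𝔸) (s : Set E) : Prop :=
  DifferentiableOn ℂ b s ∧ ∀ x ∈ s, ∀ w, fderiv ℂ b x w = b x * B₂ x w - B₁ x w * b x

theorem fderiv_apply_eq_neg_mul_of_mul_eq_one {a ai : E → 𝔸} {x : E} (ha : DifferentiableAt ℂ a x)
    (hai : DifferentiableAt ℂ ai x) (hleft : ai * a =ᶠ[𝓝 x] 1) (hright : a x * ai x = 1) (w : E) :
    fderiv ℂ ai x w = -(ai x * fderiv ℂ a x w * ai x) := by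
  have hsum : ai x * fderiv ℂ a x w + fderiv ℂ ai x w * a x = 0 := by
    rw [← fderiv_mul_apply hai ha, hleft.fderiv_eq]
    simp
  calc fderiv ℂ ai x w = fderiv ℂ ai x w * a x * ai x := by rw [mul_assoc, hright, mul_one]
    _ = -(ai x * fderiv ℂ a x w * ai x) := by
      rw [eq_neg_of_add_eq_zero_right hsum]
      noncomm_ring

theorem solvesGaugeEqOn_inv_mul {s : Set E} (hs : IsOpen s) {A : E → E →L[ℂ] 𝔸}
    {Qa Qia Qb Qib : E → 𝔸} (hQa : DifferentiableOn ℂ Qa s) (hQia : DifferentiableOn ℂ Qia s)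
    (hQb : DifferentiableOn ℂ Qb s) (hinva : ∀ x ∈ s, Qa x * Qia x = 1 ∧ Qia x * Qa x = 1)
    (hinvb : ∀ x ∈ s, Qb x * Qib x = 1) {Ba Bb : E → E →L[ℂ] 𝔸}
    (hBa : ∀ x ∈ s, ∀ w, Ba x w = Qia x * fderiv ℂ Qa x w + Qia x * (A x w * Qa x))
    (hBb : ∀ x ∈ s, ∀ w, Bb x w = Qib x * fderiv ℂ Qb x w + Qib x * (A x w * Qb x)) :
    SolvesGaugeEqOn Ba Bb (Qia * Qb) s := by
  refine ⟨hQia.mul hQb, fun x hx w => ?_⟩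
  have hx' := hs.mem_nhds hx
  have hdQia := fderiv_apply_eq_neg_mul_of_mul_eq_one (hQa.differentiableAt hx')
    (hQia.differentiableAt hx') (eventuallyEq_of_mem hx' fun y hy => (hinva y hy).2)
    (hinva x hx).1 w
  rw [fderiv_mul_apply (hQia.differentiableAt hx') (hQb.differentiableAt hx'), hdQia, hBa x hx,
    hBb x hx, Pi.mul_apply]
  calc
    _ = Qia x * fderiv ℂ Qb x w + -(Qia x * fderiv ℂ Qa x w * Qia x) * Qb x
        + Qia x * (Qb x * Qib x - 1) * (fderiv ℂ Qb x w + A x w * Qb x)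
        - Qia x * A x w * (Qa x * Qia x - 1) * Qb x := by
      simp [hinvb x hx, (hinva x hx).1]
    _ = _ := by noncomm_ring

noncomputable def covDeriv (B : E → E →L[ℂ] 𝔸) (v : E) (S : E → 𝔸) : E → 𝔸 :=
  fun x => fderiv ℂ S x v + B x v * S x

section covDeriv

variable {B B₁ B₂ : E → E →L[ℂ] 𝔸} {v : E} {s : Set E} {b S S' : E → 𝔸}

theorem eqOn_covDeriv_mul (hs : IsOpen s) (hb : SolvesGaugeEqOn B₁ B₂ b s)
    (hS : DifferentiableOn ℂ S s) (h : EqOn S' (b * S) s) :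
    EqOn (covDeriv B₁ v S') (b * covDeriv B₂ v S) s := by
  intro x hx
  have hx' := hs.mem_nhds hx
  have hS'x : fderiv ℂ S' x = fderiv ℂ (b * S) x := (eventuallyEq_of_mem hx' h).fderiv_eq
  simp only [covDeriv, Pi.mul_apply, hS'x, h hx, hb.2 x hx,
    fderiv_mul_apply (hb.1.differentiableAt hx') (hS.differentiableAt hx')]
  noncomm_ring

variable [CompleteSpace 𝔸]

theorem AnalyticOnNhd.covDeriv (hB : AnalyticOnNhd ℂ B s) (hS : AnalyticOnNhd ℂ S s) :
    AnalyticOnNhd ℂ (_root_.covDeriv B v S) s := fun x hx =>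
  ((hS.fderiv x hx).clm_apply_const v).add (((hB x hx).clm_apply_const v).mul (hS x hx))

theorem AnalyticOnNhd.covDeriv_iterate (hB : AnalyticOnNhd ℂ B s) (hS : AnalyticOnNhd ℂ S s)
    (i : ℕ) : AnalyticOnNhd ℂ ((_root_.covDeriv B v)^[i] S) s := by
  induction i with
  | zero => exact hS
  | succ i ih => rw [Function.iterate_succ_apply']; exact hB.covDeriv ih

theorem eqOn_covDeriv_iterate_mul (hs : IsOpen s) (hb : SolvesGaugeEqOn B₁ B₂ b s)
    (hB₂ : AnalyticOnNhd ℂ B₂ s) (hS : AnalyticOnNhd ℂ S s) (h : EqOn S' (b * S) s) (i : ℕ) :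
    EqOn ((covDeriv B₁ v)^[i] S') (b * (covDeriv B₂ v)^[i] S) s := by
  induction i with
  | zero => exact h
  | succ i ih =>
    simp only [Function.iterate_succ_apply']
    exact eqOn_covDeriv_mul hs hb (hB₂.covDeriv_iterate hS i).differentiableOn ih

/-- One-variable model of `covDeriv`: each step `ψ ↦ ψ' + C ψ` lowers the order of vanishing at
`0` by one and multiplies the leading coefficient by that order. -/
theorem eq_factorial_smul_of_eventuallyEq_pow_smul {C : ℂ → 𝔸} (hC : AnalyticAt ℂ C 0) (j : ℕ) :
    ∀ {ψ : ℕ → ℂ → 𝔸} {w : ℂ → 𝔸}, AnalyticAt ℂ w 0 →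
      (∀ i, ψ (i + 1) =ᶠ[𝓝 0] fun t => deriv (ψ i) t + C t * ψ i t) →
      (ψ 0 =ᶠ[𝓝 0] fun t => t ^ j • w t) → ψ j 0 = (j ! : ℂ) • w 0 := by
  induction j with
  | zero =>
    intro ψ w _ _ h0
    simpa using h0.eq_of_nhds
  | succ j ih =>
    intro ψ w hw hψ h0
    set w₁ : ℂ → 𝔸 := fun t => ((j : ℂ) + 1) • w t + t • (deriv w t + C t * w t)
    have h1 : ψ 1 =ᶠ[𝓝 0] fun t => t ^ j • w₁ t := by
      filter_upwards [hψ 0, h0, h0.deriv, hw.eventually_analyticAt] with t hψt h0t hdt hwt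
      rw [hψt, hdt, h0t, deriv_fun_smul (by fun_prop) hwt.differentiableAt, deriv_pow_field]
      simp only [w₁, mul_smul_comm, Nat.add_sub_cancel]
      push_cast
      module
    have hj := ih (ψ := fun i => ψ (i + 1)) (by fun_prop) (fun i => hψ (i + 1)) h1
    simp only [w₁, zero_smul, add_zero] at hj
    rw [hj, smul_smul, Nat.factorial_succ]
    push_cast
    ring_nf

theorem covDeriv_iterate_smul_one_apply {U : Set E} (hU : IsOpen U) (hB : AnalyticOnNhd ℂ B U)
    {f : E → ℂ} {u : ℂ → ℂ} {x₀ : E} (hf : AnalyticOnNhd ℂ f U) (hx₀ : x₀ ∈ U)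
    (hu : AnalyticAt ℂ u 0) (j : ℕ) (hfu : ∀ᶠ t in 𝓝 0, f (x₀ + t • v) = t ^ j * u t) :
    (covDeriv B v)^[j] (fun x => f x • (1 : 𝔸)) x₀ = ((j ! : ℂ) * u 0) • 1 := by
  set ℓ : ℂ → E := fun t => x₀ + t • v
  have hℓ : ∀ t, HasDerivAt ℓ v t := fun t =>
    (by simpa using (hasDerivAt_id t).smul_const v :
      HasDerivAt (fun t : ℂ => t • v) v t).const_add x₀
  have hℓU : ∀ᶠ t in 𝓝 0, ℓ t ∈ U :=
    (hℓ 0).continuousAt.preimage_mem_nhds (by simpa [ℓ] using hU.mem_nhds hx₀)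
  have hS : ∀ i, AnalyticOnNhd ℂ ((covDeriv B v)^[i] fun x => f x • (1 : 𝔸)) U :=
    hB.covDeriv_iterate fun x hx => (hf x hx).smul analyticAt_const
  have key := eq_factorial_smul_of_eventuallyEq_pow_smul (C := fun t => B (ℓ t) v)
    (((hB x₀ hx₀).comp_of_eq (by fun_prop) (by simp [ℓ])).clm_apply_const v) j
    (ψ := fun i t => (covDeriv B v)^[i] (fun x => f x • (1 : 𝔸)) (ℓ t))
    (w := fun t => u t • 1) (hu.smul analyticAt_const) (fun i => ?_) ?_
  · simpa [ℓ, smul_smul] using key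
  · filter_upwards [hℓU] with t ht
    rw [Function.iterate_succ_apply', covDeriv]
    congr 1
    exact ((hS i (ℓ t) ht).differentiableAt.hasFDerivAt.comp_hasDerivAt t (hℓ t)).deriv.symm
  · filter_upwards [hfu] with t ht
    simp only [ℓ, Function.iterate_zero_apply, ht, mul_smul]

end covDeriv

theorem exists_eventuallyEq_pow_mul_of_mem_ball {f : E → ℂ} {x₀ y : E} {r : ℝ}
    (hf : AnalyticOnNhd ℂ f (ball x₀ r)) (hy : y ∈ ball x₀ (r / 2)) (hfy : f y ≠ 0) :
    ∃ (j : ℕ) (u : ℂ → ℂ), AnalyticAt ℂ u 0 ∧ u 0 ≠ 0 ∧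
      ∀ᶠ t in 𝓝 0, f (x₀ + t • (y - x₀)) = t ^ j * u t := by
  set q : ℂ → ℂ := fun t => f (x₀ + t • (y - x₀))
  have hq : AnalyticOnNhd ℂ q (ball 0 2) := by
    intro t ht
    refine (hf _ ?_).comp (by fun_prop)
    rw [mem_ball_iff_norm] at hy ht ⊢
    calc ‖x₀ + t • (y - x₀) - x₀‖ = ‖t‖ * ‖y - x₀‖ := by rw [add_sub_cancel_left, norm_smul]
      _ < 2 * (r / 2) := by gcongr; simpa using ht
      _ = r := by ring
  have hq0 : ¬∀ᶠ t in 𝓝 0, q t = 0 := fun h => hfy <| by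
    simpa [q] using hq.eqOn_zero_of_preconnected_of_eventuallyEq_zero
      (convex_ball 0 2).isPreconnected (mem_ball_self two_pos) h (by simp : (1 : ℂ) ∈ ball 0 2)
  obtain ⟨j, u, hu, hu0, hqu⟩ :=
    (hq 0 (mem_ball_self two_pos)).exists_eventuallyEq_pow_smul_nonzero_iff.mpr hq0
  exact ⟨j, u, hu, hu0, by simpa using hqu⟩

section Extension

variable {F G : Type*} [NormedAddCommGroup F] [NormedSpace ℂ F] [NormedAddCommGroup G]
  [NormedSpace ℂ G] {U : Set E} {g : E → G}

theorem mem_closure_setOf_ne_zero_of_mem_ball (hg : AnalyticOnNhd ℂ g U) {x₀ y : E} {r : ℝ}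
    (hball : ball x₀ r ⊆ U) (hx₀ : x₀ ∈ closure {x ∈ U | g x ≠ 0}) (hy : y ∈ ball x₀ r) :
    y ∈ closure {x ∈ U | g x ≠ 0} := by
  by_contra hy'
  have hgy : g =ᶠ[𝓝 y] 0 := by
    filter_upwards [isClosed_closure.isOpen_compl.mem_nhds hy', isOpen_ball.mem_nhds hy]
      with z hz hzball
    by_contra hgz
    exact hz (subset_closure ⟨hball hzball, hgz⟩)
  have hg0 : EqOn g 0 (ball x₀ r) := (hg.mono hball).eqOn_zero_of_preconnected_of_eventuallyEq_zero
    (convex_ball x₀ r).isPreconnected hy hgy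
  obtain ⟨z, hzball, -, hgz⟩ :=
    mem_closure_iff_nhds.mp hx₀ _ (ball_mem_nhds x₀ (pos_of_mem_ball hy))
  exact hgz (hg0 hzball)

theorem exists_analyticOnNhd_eqOn_of_forall_analyticAt (hU : IsOpen U) (hg : AnalyticOnNhd ℂ g U)
    {b : E → F} (h : ∀ x ∈ U ∩ closure {x ∈ U | g x ≠ 0},
      ∃ c, AnalyticAt ℂ c x ∧ c =ᶠ[𝓝[{x ∈ U | g x ≠ 0}] x] b) :
    ∃ b', AnalyticOnNhd ℂ b' U ∧ EqOn b' b {x ∈ U | g x ≠ 0} := by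
  classical
  set Ω := {x ∈ U | g x ≠ 0}
  set b' : E → F := fun x => if x ∈ closure Ω then limUnder (𝓝[Ω] x) b else 0
  have hb' : ∀ x ∈ closure Ω, ∀ c : E → F, ContinuousAt c x → c =ᶠ[𝓝[Ω] x] b → b' x = c x := by
    intro x hx c hc hcb
    have := mem_closure_iff_nhdsWithin_neBot.mp hx
    simp only [b', if_pos hx]
    exact (hc.continuousWithinAt.tendsto.congr' hcb).limUnder_eq
  refine ⟨b', fun x₀ hx₀ => ?_, fun x hx => ?_⟩
  · by_cases hcl : x₀ ∈ closure Ω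
    · obtain ⟨c, hc, hcb⟩ := h x₀ ⟨hx₀, hcl⟩
      obtain ⟨r, hr, hball⟩ := Metric.isOpen_iff.mp hU x₀ hx₀
      refine hc.congr ?_
      filter_upwards [ball_mem_nhds x₀ hr, (eventually_nhdsWithin_iff.mp hcb).eventually_nhds,
        hc.eventually_continuousAt] with y hy hcby hcy
      exact (hb' y (mem_closure_setOf_ne_zero_of_mem_ball hg hball hcl hy) c hcy
        (eventually_nhdsWithin_iff.mpr hcby)).symm
    · refine (analyticAt_const (v := (0 : F))).congr ?_
      filter_upwards [isClosed_closure.isOpen_compl.mem_nhds hcl] with y hy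
      simp only [b', if_neg hy]
  · obtain ⟨c, hc, hcb⟩ := h x ⟨hx.1, subset_closure hx⟩
    rw [hb' x (subset_closure hx) c hc.continuousAt hcb]
    exact hcb.eq_of_nhdsWithin hx

end Extension

section RemovableSingularity

variable [CompleteSpace 𝔸] {U : Set E} {g : E → ℂ} {B₁ B₂ : E → E →L[ℂ] 𝔸} {b H : E → 𝔸} {k : ℕ}

theorem exists_analyticAt_eventuallyEq_of_eventuallyEq_mul {S S' : E → 𝔸} {s : Set E} {x₀ : E}
    (hS : AnalyticAt ℂ S x₀) (hS' : AnalyticAt ℂ S' x₀) (hunit : IsUnit (S x₀))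
    (h : S' =ᶠ[𝓝[s] x₀] b * S) : ∃ c, AnalyticAt ℂ c x₀ ∧ c =ᶠ[𝓝[s] x₀] b := by
  refine ⟨fun x => S' x * Ring.inverse (S x),
    hS'.mul ((analyticAt_inverse hunit.unit).comp_of_eq hS hunit.unit_spec.symm), ?_⟩
  have hunits : ∀ᶠ x in 𝓝[s] x₀, IsUnit (S x) :=
    nhdsWithin_le_nhds (hS.continuousAt.eventually (Units.isOpen.mem_nhds hunit))
  filter_upwards [h, hunits] with x hx hxu
  rw [hx, Pi.mul_apply, mul_assoc, Ring.mul_inverse_cancel _ hxu, mul_one]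

theorem exists_analyticAt_eventuallyEq_of_solvesGaugeEqOn (hU : IsOpen U)
    (hg : AnalyticOnNhd ℂ g U) (hB₁ : AnalyticOnNhd ℂ B₁ U) (hB₂ : AnalyticOnNhd ℂ B₂ U)
    (hb : SolvesGaugeEqOn B₁ B₂ b {x ∈ U | g x ≠ 0}) (hH : AnalyticOnNhd ℂ H U)
    (hHb : ∀ x ∈ {x ∈ U | g x ≠ 0}, H x = g x ^ k • b x) {x₀ : E} (hx₀ : x₀ ∈ U)
    (hx₀Ω : x₀ ∈ closure {x ∈ U | g x ≠ 0}) :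
    ∃ c, AnalyticAt ℂ c x₀ ∧ c =ᶠ[𝓝[{x ∈ U | g x ≠ 0}] x₀] b := by
  set Ω := {x ∈ U | g x ≠ 0}
  have hΩ : IsOpen Ω := hg.continuousOn.isOpen_inter_preimage hU isOpen_compl_singleton
  set f : E → ℂ := fun x => g x ^ k
  have hf : AnalyticOnNhd ℂ f U := fun x hx => (hg x hx).pow k
  have hf1 : AnalyticOnNhd ℂ (fun x => f x • (1 : 𝔸)) U := fun x hx =>
    (hf x hx).smul analyticAt_const
  obtain ⟨r, hr, hball⟩ := Metric.isOpen_iff.mp hU x₀ hx₀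
  obtain ⟨y, hyΩ, hy⟩ := Metric.mem_closure_iff.mp hx₀Ω (r / 2) (by positivity)
  obtain ⟨j, u, hu, hu0, hfu⟩ := exists_eventuallyEq_pow_mul_of_mem_ball (hf.mono hball)
    (mem_ball'.mpr hy) (pow_ne_zero k hyΩ.2)
  set v := y - x₀
  have hunit : IsUnit ((covDeriv B₂ v)^[j] (fun x => f x • (1 : 𝔸)) x₀) := by
    rw [covDeriv_iterate_smul_one_apply hU hB₂ hf hx₀ hu j hfu,
      ← Algebra.algebraMap_eq_smul_one]
    exact (isUnit_iff_ne_zero.mpr (mul_ne_zero (by exact_mod_cast j.factorial_ne_zero) hu0)).map _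
  have hpair := eqOn_covDeriv_iterate_mul (v := v) (S' := H) hΩ hb (hB₂.mono fun _ hx => hx.1)
    (hf1.mono fun _ hx => hx.1) (fun x hx => by simp [f, hHb x hx]) j
  exact exists_analyticAt_eventuallyEq_of_eventuallyEq_mul (hB₂.covDeriv_iterate hf1 j x₀ hx₀)
    (hB₁.covDeriv_iterate hH j x₀ hx₀) hunit (eventuallyEq_nhdsWithin_of_eqOn hpair)

theorem exists_analyticOnNhd_eqOn_of_solvesGaugeEqOn (hU : IsOpen U)
    (hg : AnalyticOnNhd ℂ g U) (hB₁ : AnalyticOnNhd ℂ B₁ U) (hB₂ : AnalyticOnNhd ℂ B₂ U)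
    (hb : SolvesGaugeEqOn B₁ B₂ b {x ∈ U | g x ≠ 0}) (hH : AnalyticOnNhd ℂ H U)
    (hHb : ∀ x ∈ {x ∈ U | g x ≠ 0}, H x = g x ^ k • b x) :
    ∃ b', AnalyticOnNhd ℂ b' U ∧ EqOn b' b {x ∈ U | g x ≠ 0} :=
  exists_analyticOnNhd_eqOn_of_forall_analyticAt hU hg fun _ hx =>
    exists_analyticAt_eventuallyEq_of_solvesGaugeEqOn hU hg hB₁ hB₂ hb hH hHb hx.1 hx.2

end RemovableSingularity

theorem exists_analyticOnNhd_eqOn_inv_mul [CompleteSpace 𝔸] {U : Set E} (hU : IsOpen U)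
    {g : E → ℂ} (hg : AnalyticOnNhd ℂ g U) {A : E → E →L[ℂ] 𝔸} {Qa Qia Qb Qib : E → 𝔸}
    (hQa : AnalyticOnNhd ℂ Qa {x ∈ U | g x ≠ 0}) (hQb : AnalyticOnNhd ℂ Qb {x ∈ U | g x ≠ 0})
    (hQia : AnalyticOnNhd ℂ Qia U)
    (hQb_mero : ∃ k : ℕ, ∃ Qb', AnalyticOnNhd ℂ Qb' U ∧
      ∀ x ∈ {x ∈ U | g x ≠ 0}, Qb' x = g x ^ k • Qb x)
    (hinva : ∀ x ∈ {x ∈ U | g x ≠ 0}, Qa x * Qia x = 1 ∧ Qia x * Qa x = 1)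
    (hinvb : ∀ x ∈ {x ∈ U | g x ≠ 0}, Qb x * Qib x = 1) {Ba Bb : E → E →L[ℂ] 𝔸}
    (hBa : AnalyticOnNhd ℂ Ba U) (hBb : AnalyticOnNhd ℂ Bb U)
    (hBa_eq : ∀ x ∈ {x ∈ U | g x ≠ 0}, ∀ w,
      Ba x w = Qia x * fderiv ℂ Qa x w + Qia x * (A x w * Qa x))
    (hBb_eq : ∀ x ∈ {x ∈ U | g x ≠ 0}, ∀ w,
      Bb x w = Qib x * fderiv ℂ Qb x w + Qib x * (A x w * Qb x)) :
    ∃ c, AnalyticOnNhd ℂ c U ∧ EqOn c (Qia * Qb) {x ∈ U | g x ≠ 0} := by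
  obtain ⟨k, Qb', hQb', hQb'_eq⟩ := hQb_mero
  have hΩ : IsOpen {x ∈ U | g x ≠ 0} :=
    hg.continuousOn.isOpen_inter_preimage hU isOpen_compl_singleton
  refine exists_analyticOnNhd_eqOn_of_solvesGaugeEqOn (k := k) hU hg hBa hBb
    (solvesGaugeEqOn_inv_mul hΩ hQa.differentiableOn (hQia.mono fun _ hx => hx.1).differentiableOn
      hQb.differentiableOn hinva hinvb hBa_eq hBb_eq) (hQia.mul hQb') fun x hx => ?_
  simp [hQb'_eq x hx]

-- Two frames span the same submodule exactly when `Q₁⁻¹ Q₂` and `Q₂⁻¹ Q₁` are holomorphic on `U`.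
theorem preserved_submodule_unique_general
    (n : ℕ) (U : Set (Fin n → ℂ)) (hU : IsOpen U)
    (g : (Fin n → ℂ) → ℂ) (hg : AnalyticOnNhd ℂ g U)
    (D : Set (Fin n → ℂ)) (hD : D = {x ∈ U | g x = 0})
    -- the meromorphic affine connection
    (A : (Fin n → ℂ) → (Fin n → ℂ) →L[ℂ] ((Fin n → ℂ) →L[ℂ] (Fin n → ℂ)))
    -- the two frames
    (Q₁ Q₂ Qi₁ Qi₂ : (Fin n → ℂ) → ((Fin n → ℂ) →L[ℂ] (Fin n → ℂ)))
    (hQ₁ : AnalyticOnNhd ℂ Q₁ (U \ D)) (hQ₂ : AnalyticOnNhd ℂ Q₂ (U \ D))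
    (hQ₁mero : ∃ k : ℕ, ∃ Q', AnalyticOnNhd ℂ Q' U ∧
      ∀ x ∈ U \ D, Q' x = g x ^ k • Q₁ x)
    (hQ₂mero : ∃ k : ℕ, ∃ Q', AnalyticOnNhd ℂ Q' U ∧
      ∀ x ∈ U \ D, Q' x = g x ^ k • Q₂ x)
    -- `TM ⊆ E₁, E₂` : the inverse frames are holomorphic on `U`
    (hQi₁ : AnalyticOnNhd ℂ Qi₁ U) (hQi₂ : AnalyticOnNhd ℂ Qi₂ U)
    (hinv₁ : ∀ x ∈ U \ D, (Q₁ x).comp (Qi₁ x) = ContinuousLinearMap.id ℂ _ ∧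
      (Qi₁ x).comp (Q₁ x) = ContinuousLinearMap.id ℂ _)
    (hinv₂ : ∀ x ∈ U \ D, (Q₂ x).comp (Qi₂ x) = ContinuousLinearMap.id ℂ _ ∧
      (Qi₂ x).comp (Q₂ x) = ContinuousLinearMap.id ℂ _)
    -- `∇` restricts to a holomorphic connection on `E₁` and on `E₂`
    (hhol₁ : ∃ B : (Fin n → ℂ) → (Fin n → ℂ) →L[ℂ] ((Fin n → ℂ) →L[ℂ] (Fin n → ℂ)), AnalyticOnNhd ℂ B U ∧ ∀ x ∈ U \ D, ∀ w : Fin n → ℂ,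
      B x w = (Qi₁ x).comp (fderiv ℂ Q₁ x w) + (Qi₁ x).comp ((A x w).comp (Q₁ x)))
    (hhol₂ : ∃ B : (Fin n → ℂ) → (Fin n → ℂ) →L[ℂ] ((Fin n → ℂ) →L[ℂ] (Fin n → ℂ)), AnalyticOnNhd ℂ B U ∧ ∀ x ∈ U \ D, ∀ w : Fin n → ℂ,
      B x w = (Qi₂ x).comp (fderiv ℂ Q₂ x w) + (Qi₂ x).comp ((A x w).comp (Q₂ x))) :
    ∃ b binv : (Fin n → ℂ) → ((Fin n → ℂ) →L[ℂ] (Fin n → ℂ)),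
      AnalyticOnNhd ℂ b U ∧ AnalyticOnNhd ℂ binv U ∧
      ∀ x ∈ U \ D, b x = (Qi₁ x).comp (Q₂ x) ∧ binv x = (Qi₂ x).comp (Q₁ x) := by
  have hΩ : U \ D = {x ∈ U | g x ≠ 0} := by
    ext x
    simp +contextual [hD]
  rw [hΩ] at hQ₁ hQ₂ hQ₁mero hQ₂mero hinv₁ hinv₂ hhol₁ hhol₂ ⊢
  obtain ⟨B₁, hB₁, hB₁_eq⟩ := hhol₁
  obtain ⟨B₂, hB₂, hB₂_eq⟩ := hhol₂
  obtain ⟨b, hb, hb_eq⟩ := exists_analyticOnNhd_eqOn_inv_mul hU hg hQ₁ hQ₂ hQi₁ hQ₂mero hinv₁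
    (fun x hx => (hinv₂ x hx).1) hB₁ hB₂ hB₁_eq hB₂_eq
  obtain ⟨binv, hbinv, hbinv_eq⟩ := exists_analyticOnNhd_eqOn_inv_mul hU hg hQ₂ hQ₁ hQi₂ hQ₁mero
    hinv₂ (fun x hx => (hinv₁ x hx).1) hB₂ hB₁ hB₂_eq hB₁_eq
  exact ⟨b, binv, hb, hbinv, fun x hx => ⟨hb_eq hx, hbinv_eq hx⟩⟩

theorem preserved_submodule_unique
    (n : ℕ) (U : Set (Fin n → ℂ)) (hU : IsOpen U)
    (g : (Fin n → ℂ) → ℂ) (hg : AnalyticOnNhd ℂ g U)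
    (D : Set (Fin n → ℂ)) (hD : D = {x ∈ U | g x = 0})
    -- the meromorphic affine connection
    (A : (Fin n → ℂ) → (Fin n → ℂ) →L[ℂ] ((Fin n → ℂ) →L[ℂ] (Fin n → ℂ)))
    (hA : AnalyticOnNhd ℂ A (U \ D))
    (hAmero : ∃ k : ℕ, ∃ A' , AnalyticOnNhd ℂ A' U ∧
      ∀ x ∈ U \ D, A' x = g x ^ k • A x)
    -- the two frames
    (Q₁ Q₂ Qi₁ Qi₂ : (Fin n → ℂ) → ((Fin n → ℂ) →L[ℂ] (Fin n → ℂ)))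
    (hQ₁ : AnalyticOnNhd ℂ Q₁ (U \ D)) (hQ₂ : AnalyticOnNhd ℂ Q₂ (U \ D))
    (hQ₁mero : ∃ k : ℕ, ∃ Q', AnalyticOnNhd ℂ Q' U ∧
      ∀ x ∈ U \ D, Q' x = g x ^ k • Q₁ x)
    (hQ₂mero : ∃ k : ℕ, ∃ Q', AnalyticOnNhd ℂ Q' U ∧
      ∀ x ∈ U \ D, Q' x = g x ^ k • Q₂ x)
    -- `TM ⊆ E₁, E₂` : the inverse frames are holomorphic on `U`
    (hQi₁ : AnalyticOnNhd ℂ Qi₁ U) (hQi₂ : AnalyticOnNhd ℂ Qi₂ U)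
    (hinv₁ : ∀ x ∈ U \ D, (Q₁ x).comp (Qi₁ x) = ContinuousLinearMap.id ℂ _ ∧
      (Qi₁ x).comp (Q₁ x) = ContinuousLinearMap.id ℂ _)
    (hinv₂ : ∀ x ∈ U \ D, (Q₂ x).comp (Qi₂ x) = ContinuousLinearMap.id ℂ _ ∧
      (Qi₂ x).comp (Q₂ x) = ContinuousLinearMap.id ℂ _)
    -- `∇` restricts to a holomorphic connection on `E₁` and on `E₂`
    (hhol₁ : ∃ B : (Fin n → ℂ) → (Fin n → ℂ) →L[ℂ] ((Fin n → ℂ) →L[ℂ] (Fin n → ℂ)), AnalyticOnNhd ℂ B U ∧ ∀ x ∈ U \ D, ∀ w : Fin n → ℂ,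
      B x w = (Qi₁ x).comp (fderiv ℂ Q₁ x w) + (Qi₁ x).comp ((A x w).comp (Q₁ x)))
    (hhol₂ : ∃ B : (Fin n → ℂ) → (Fin n → ℂ) →L[ℂ] ((Fin n → ℂ) →L[ℂ] (Fin n → ℂ)), AnalyticOnNhd ℂ B U ∧ ∀ x ∈ U \ D, ∀ w : Fin n → ℂ,
      B x w = (Qi₂ x).comp (fderiv ℂ Q₂ x w) + (Qi₂ x).comp ((A x w).comp (Q₂ x))) :
    ∃ b binv : (Fin n → ℂ) → ((Fin n → ℂ) →L[ℂ] (Fin n → ℂ)),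
      AnalyticOnNhd ℂ b U ∧ AnalyticOnNhd ℂ binv U ∧
      ∀ x ∈ U \ D, b x = (Qi₁ x).comp (Q₂ x) ∧ binv x = (Qi₂ x).comp (Q₁ x) :=
  preserved_submodule_unique_general n U hU g hg D hD A Q₁ Q₂ Qi₁ Qi₂ hQ₁ hQ₂ hQ₁mero hQ₂mero hQi₁
    hQi₂ hinv₁ hinv₂ hhol₁ hhol₂
end

section
/- Let ω₀ be a holomorphic one-form with values in g = g_{-1} ⊕ p on the total space E of a holomorphic P-principal bundle p : E → M, defining a branched holomorphic Cartan geometry with polar (degeneracy) divisor D̃ = p^{-1}(D). For A ∈ g ∖ p, let T_A be the rank-one singular foliation with ω₀(T_A) ⊂ O_E(*D̃)·A. Then T_A is everywhere transverse to ker(dp): any local holomorphic vector field Z generating T_A is nowhere tangent to the fibers of p. -/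
/-!
At a point `x` where `Z` were vertical, `Z x = (0, w)`, the solder condition kills the
`g₋₁`-component of `ω₀ x (Z x)`. On the other hand `ω₀ (Z)` lies on the line `ℂ ∙ A` at the
regular points, which accumulate at `x`; the line is closed, so `ω₀ x (Z x) = c • A` too.
Since `A` has nonzero `g₋₁`-component, `c = 0`, hence the `p`-component of `ω₀ x (0, w)`
vanishes and the Maurer–Cartan condition forces `w = 0`, contradicting `Z x ≠ 0`.
-/

open Submodule

theorem eq_zero_of_apply_mem_span_singleton {K E F G H : Type*} [Field K]
    [AddCommGroup E] [Module K E] [AddCommGroup F] [Module K F]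
    [AddCommGroup G] [Module K G] [AddCommGroup H] [Module K H]
    (T : E × F →ₗ[K] G × H) (hsolder : ∀ w, (T (0, w)).1 = 0)
    (hMC : Function.Injective fun w => (T (0, w)).2)
    {a : G × H} (ha : a.1 ≠ 0) {w : F} (hw : T (0, w) ∈ K ∙ a) : w = 0 := by
  obtain ⟨c, hc⟩ := mem_span_singleton.mp hw
  have hc0 : c = 0 := by
    have h1 : c • a.1 = 0 := by rw [← Prod.smul_fst, hc, hsolder]
    exact (smul_eq_zero.mp h1).resolve_right ha
  have hTw : T (0, w) = T (0, 0) := by rw [← hc, hc0, zero_smul, Prod.mk_zero_zero, map_zero]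
  exact hMC (congrArg Prod.snd hTw)

theorem mem_of_continuousAt_of_mem_closure {X Y : Type*} [TopologicalSpace X]
    [TopologicalSpace Y] {f : X → Y} {s : Set X} {C : Set Y} {x : X} (hC : IsClosed C)
    (hf : ContinuousAt f x) (hx : x ∈ closure s) (hs : Set.MapsTo f s C) : f x ∈ C :=
  hC.closure_eq ▸ hf.continuousWithinAt.mem_closure hx hs

theorem distinguished_foliation_transverse_to_fibers_general
    (n m : ℕ)
    (W : Set ((Fin n → ℂ) × (Fin m → ℂ)))
    (ω₀ : (Fin n → ℂ) × (Fin m → ℂ) →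
      ((Fin n → ℂ) × (Fin m → ℂ)) →L[ℂ] ((Fin n → ℂ) × (Fin m → ℂ)))
    (hω₀ : AnalyticOnNhd ℂ ω₀ W)
    -- the `g₋₁`-component of `ω₀` vanishes on `ker(dp)`
    (hsolder : ∀ x ∈ W, ∀ v : Fin m → ℂ, (ω₀ x (0, v)).1 = 0)
    -- `ω₀` restricts to the Maurer–Cartan form on the fibers
    (hMC : ∀ x ∈ W, Function.Bijective (fun v : Fin m → ℂ => (ω₀ x (0, v)).2))
    -- the degeneracy locus `D̃` of `ω₀` is a proper analytic subset
    (hdense : ∀ x ∈ W, x ∈ closure {y | y ∈ W ∧ Function.Bijective (ω₀ y)})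
    -- `A ∈ g ∖ p`
    (a : (Fin n → ℂ) × (Fin m → ℂ)) (ha : a.1 ≠ 0)
    -- `Z` is a local holomorphic generator of the distinguished foliation `T_A`
    (Z : (Fin n → ℂ) × (Fin m → ℂ) → (Fin n → ℂ) × (Fin m → ℂ))
    (hZ : AnalyticOnNhd ℂ Z W)
    (hZne : ∀ x ∈ W, Z x ≠ 0)
    (hZdir : ∀ x ∈ W, Function.Bijective (ω₀ x) → ∃ c : ℂ, ω₀ x (Z x) = c • a) :
    ∀ x ∈ W, (Z x).1 ≠ 0 := by
  intro x hx hZx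
  have hvert : Z x = (0, (Z x).2) := Prod.ext hZx rfl
  have hline : ω₀ x (Z x) ∈ ℂ ∙ a := by
    refine mem_of_continuousAt_of_mem_closure (f := fun y => ω₀ y (Z y))
      (ℂ ∙ a).closed_of_finiteDimensional
      ((hω₀ x hx).continuousAt.clm_apply (hZ x hx).continuousAt) (hdense x hx) ?_
    rintro y ⟨hyW, hyreg⟩
    obtain ⟨c, hc⟩ := hZdir y hyW hyreg
    exact mem_span_singleton.mpr ⟨c, hc.symm⟩
  rw [hvert] at hline
  have hZ2 : (Z x).2 = 0 := eq_zero_of_apply_mem_span_singleton (ω₀ x).toLinearMap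
    (hsolder x hx) (hMC x hx).injective ha hline
  exact hZne x hx (by rw [hvert, hZ2, Prod.mk_zero_zero])

theorem distinguished_foliation_transverse_to_fibers
    (n m : ℕ)
    (W : Set ((Fin n → ℂ) × (Fin m → ℂ))) (hW : IsOpen W)
    (ω₀ : (Fin n → ℂ) × (Fin m → ℂ) →
      ((Fin n → ℂ) × (Fin m → ℂ)) →L[ℂ] ((Fin n → ℂ) × (Fin m → ℂ)))
    (hω₀ : AnalyticOnNhd ℂ ω₀ W)
    -- the `g₋₁`-component of `ω₀` vanishes on `ker(dp)`
    (hsolder : ∀ x ∈ W, ∀ v : Fin m → ℂ, (ω₀ x (0, v)).1 = 0)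
    -- `ω₀` restricts to the Maurer–Cartan form on the fibers
    (hMC : ∀ x ∈ W, Function.Bijective (fun v : Fin m → ℂ => (ω₀ x (0, v)).2))
    -- the degeneracy locus `D̃` of `ω₀` is a proper analytic subset
    (hdense : ∀ x ∈ W, x ∈ closure {y | y ∈ W ∧ Function.Bijective (ω₀ y)})
    -- `A ∈ g ∖ p`
    (a : (Fin n → ℂ) × (Fin m → ℂ)) (ha : a.1 ≠ 0)
    -- `Z` is a local holomorphic generator of the distinguished foliation `T_A`
    (Z : (Fin n → ℂ) × (Fin m → ℂ) → (Fin n → ℂ) × (Fin m → ℂ))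
    (hZ : AnalyticOnNhd ℂ Z W)
    (hZne : ∀ x ∈ W, Z x ≠ 0)
    (hZdir : ∀ x ∈ W, Function.Bijective (ω₀ x) → ∃ c : ℂ, ω₀ x (Z x) = c • a) :
    ∀ x ∈ W, (Z x).1 ≠ 0 :=
  distinguished_foliation_transverse_to_fibers_general n m W ω₀ hω₀ hsolder hMC hdense a ha Z hZ
    hZne hZdir
end
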